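/- arXiv:math/0106121 — 5 statements merged into one kernel-verified Lean document; each statement's English description precedes it below -/
import Mathlib

section
/- Let z be a finite word and let w be a factor (contiguous subword) of z. If z has period T, if w has minimal period T', and if T + T' ≤ |w|, then T' is a period of z. -/
namespace PalPaper

variable {α : Type*}

/-- The finite word `u i, u (i+1), …, u (i+k-1)` read off the infinite sequence `u`. -/
def factorAt (u : ℕ → α) (i k : ℕ) : List α :=
  (List.range k).map fun j => u (i + j)

/-- `w` occurs as a contiguous block (factor) in the infinite sequence `u`. -/
def IsFactor (u : ℕ → α) (w : List α) : Prop :=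
  ∃ i, w = factorAt u i w.length

/-- A palindrome is a word equal to its reversal. -/
def IsPalindrome (w : List α) : Prop := w.reverse = w

/-- Number of distinct factors of length `k` of `u`. -/
noncomputable def facComplexity (u : ℕ → α) (k : ℕ) : ℕ :=
  Set.ncard {w : List α | w.length = k ∧ IsFactor u w}

/-- Number of distinct palindromic factors of length `k` of `u`. -/
noncomputable def palComplexity (u : ℕ → α) (k : ℕ) : ℕ :=
  Set.ncard {w : List α | w.length = k ∧ IsFactor u w ∧ IsPalindrome w}

/-- `p ≥ 1` is a period of the finite word `w`. -/
def IsPeriodOf (p : ℕ) (w : List α) : Prop :=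
  1 ≤ p ∧ ∀ i (h : i + p < w.length), w[i]'(by omega) = w[i + p]'h

/-- The minimal period of a finite word. -/
noncomputable def minPeriod (w : List α) : ℕ := sInf {p | IsPeriodOf p w}

/-- The prefix of length `m` of the infinite sequence `u`, as a finite word. -/
def seqPrefix (u : ℕ → α) (m : ℕ) : List α := (List.range m).map u

/-- The word `σ(u 0) σ(u 1) ⋯ σ(u (n-1))`. -/
def substPrefix (σ : α → List α) (u : ℕ → α) (n : ℕ) : List α :=
  (List.range n).flatMap fun i => σ (u i)

/-- `v = σ(u)`: every word `σ(u 0) ⋯ σ(u (n-1))` is the corresponding prefix of `v`. -/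
def IsMorphicImage (σ : α → List α) (u v : ℕ → α) : Prop :=
  ∀ n, substPrefix σ u n = seqPrefix v (substPrefix σ u n).length

/-- `u` is a fixed point of the morphism `σ`, i.e. `σ(u) = u`. -/
def IsFixedPointOf (σ : α → List α) (u : ℕ → α) : Prop := IsMorphicImage σ u u

/-- The `k`-th iterate of a morphism, applied to a letter. -/
def morphIter (σ : α → List α) : ℕ → α → List α
  | 0, a => [a]
  | k + 1, a => (σ a).flatMap (morphIter σ k)

/-- A morphism is primitive if some iterate maps every letter to a word
containing every letter. -/
def IsPrimitive (σ : α → List α) : Prop :=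
  ∃ k, 1 ≤ k ∧ ∀ a b : α, b ∈ morphIter σ k a

/-!
Fix an occurrence of `w` at position `s` in `z`. Since `T` is a period of `z`, every position `i`
of `z` is congruent modulo `T` to some `j ∈ [s, s + T)`, so `z[i] = z[j]` and
`z[i + T'] = z[j + T']`. The hypothesis `T + T' ≤ |w|` puts both `j` and `j + T'` inside the
occurrence of `w`, where the period `T'` of `w` gives `z[j] = z[j + T']`. Here `minPeriod w` is a
genuine period (and not the junk value `sInf ∅ = 0`) because `w` inherits the period `T` from `z`.
-/

theorem isPeriodOf_iff {p : ℕ} {w : List α} :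
    IsPeriodOf p w ↔ 1 ≤ p ∧ ∀ i, i + p < w.length → w[i]? = w[i + p]? := by
  simp +contextual [IsPeriodOf, show ∀ i, i + p < w.length → i < w.length by omega]

theorem exists_mem_Ico_modEq (a : ℕ) {T : ℕ} (hT : 0 < T) (i : ℕ) :
    ∃ j ∈ Set.Ico a (a + T), j ≡ i [MOD T] := by
  -- adding `T * a ≥ a` keeps the natural subtraction from truncating
  refine ⟨a + (i + T * a - a) % T,
    ⟨by omega, by have := Nat.mod_lt (i + T * a - a) hT; omega⟩, ?_⟩
  calc a + (i + T * a - a) % T ≡ a + (i + T * a - a) [MOD T] := (Nat.mod_modEq _ T).add_left a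
    _ = i + T * a := by have := Nat.le_mul_of_pos_left a hT; omega
    _ ≡ i [MOD T] := by simp [Nat.ModEq]

theorem getElem?_append_append_of_mem_Ico (s w t : List α) {j : ℕ}
    (hj : j ∈ Set.Ico s.length (s.length + w.length)) :
    (s ++ w ++ t)[j]? = w[j - s.length]? := by
  rw [List.append_assoc, List.getElem?_append_right hj.1,
    List.getElem?_append_left (by have := hj.1; have := hj.2; omega)]

namespace IsPeriodOf

variable {p : ℕ} {w z : List α}

theorem getElem?_mod (h : IsPeriodOf p w) {i : ℕ} (hi : i < w.length) : w[i]? = w[i % p]? := by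
  induction i using Nat.strong_induction_on with
  | _ i ih =>
    rcases lt_or_ge i p with hip | hpi
    · rw [Nat.mod_eq_of_lt hip]
    · obtain ⟨j, rfl⟩ := Nat.exists_eq_add_of_le' hpi
      have hj : j < j + p := by have := h.1; omega
      rw [← (isPeriodOf_iff.mp h).2 j hi, Nat.add_mod_right, ih j hj (by omega)]

theorem getElem?_eq_of_modEq (h : IsPeriodOf p w) {a b : ℕ} (hab : a ≡ b [MOD p])
    (ha : a < w.length) (hb : b < w.length) : w[a]? = w[b]? := by
  rw [h.getElem?_mod ha, h.getElem?_mod hb, hab]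

theorem of_isInfix (h : IsPeriodOf p z) (hwz : w <:+: z) : IsPeriodOf p w := by
  obtain ⟨s, t, rfl⟩ := hwz
  refine isPeriodOf_iff.mpr ⟨h.1, fun i hi => ?_⟩
  have hlen : (s ++ w ++ t).length = s.length + w.length + t.length := by
    simp only [List.length_append]
  have hz := (isPeriodOf_iff.mp h).2 (s.length + i) (by omega)
  rwa [getElem?_append_append_of_mem_Ico s w t ⟨by omega, by omega⟩, Nat.add_assoc,
    getElem?_append_append_of_mem_Ico s w t ⟨by omega, by omega⟩, Nat.add_sub_cancel_left,
    Nat.add_sub_cancel_left] at hz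

theorem isPeriodOf_minPeriod (h : IsPeriodOf p w) : IsPeriodOf (PalPaper.minPeriod w) w :=
  Nat.sInf_mem (s := {p | IsPeriodOf p w}) ⟨p, h⟩

theorem of_isInfix_of_add_le {T T' : ℕ} (hT : IsPeriodOf T z) (hT' : IsPeriodOf T' w)
    (hwz : w <:+: z) (hsum : T + T' ≤ w.length) : IsPeriodOf T' z := by
  obtain ⟨s, t, rfl⟩ := hwz
  have hlen : (s ++ w ++ t).length = s.length + w.length + t.length := by
    simp only [List.length_append]
  refine isPeriodOf_iff.mpr ⟨hT'.1, fun i hi => ?_⟩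
  obtain ⟨j, ⟨hsj, hjT⟩, hji⟩ := exists_mem_Ico_modEq s.length hT.1 i
  calc (s ++ w ++ t)[i]? = (s ++ w ++ t)[j]? :=
        hT.getElem?_eq_of_modEq hji.symm (by omega) (by omega)
    _ = w[j - s.length]? := getElem?_append_append_of_mem_Ico s w t ⟨hsj, by omega⟩
    _ = w[j - s.length + T']? := (isPeriodOf_iff.mp hT').2 _ (by omega)
    _ = (s ++ w ++ t)[j + T']? := by
        rw [getElem?_append_append_of_mem_Ico s w t ⟨by omega, by omega⟩]
        congr 1
        omega
    _ = (s ++ w ++ t)[i + T']? :=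
        hT.getElem?_eq_of_modEq (hji.add_right T') (by omega) (by omega)

end IsPeriodOf

/-- If `w` is a factor of `z`, `z` has period `T`, `w` has minimal period `T'`,
and `T + T' ≤ |w|`, then `T'` is a period of `z`. -/
theorem stmt1 {α : Type*} (z w : List α) (T T' : ℕ)
    (hwz : w <:+: z) (hT : IsPeriodOf T z) (hT' : T' = minPeriod w)
    (hsum : T + T' ≤ w.length) :
    IsPeriodOf T' z := by
  subst hT'
  exact hT.of_isInfix_of_add_le (hT.of_isInfix hwz).isPeriodOf_minPeriod hwz hsum

end PalPaper
end

section
/- Let z be a finite word and let w and w' be two factors of z. Suppose that T, the minimal period of w, T', the minimal period of w', and Θ, the minimal period of z, satisfy Θ + T ≤ |w| and Θ + T' ≤ |w'|. Then T = T'. -/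
/-! Θ is a period of every factor of `z`, so `T ≤ Θ`. Conversely, a window of length
`Θ + T` inside `w` contains a representative `j` of every residue class modulo `Θ` together with
`j + T`, so the relation `z[i] = z[i + T]` is transported from `w` to every position of `z` by
`Θ`-periodicity: `T` is a period of `z`, whence `Θ ≤ T`. Thus `T = Θ`, and likewise `T' = Θ`. -/

namespace PalPaper

variable {α : Type*}

theorem exists_modEq_mem_Ico {p : ℕ} (hp : 0 < p) (a i : ℕ) :
    ∃ j, j ≡ i [MOD p] ∧ a ≤ j ∧ j < a + p := by
  have ha : a ≤ i + p * a := le_add_left (Nat.le_mul_of_pos_left a hp)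
  have hlt := Nat.mod_lt (i + p * a - a) hp
  refine ⟨a + (i + p * a - a) % p, ?_, le_add_right le_rfl, by omega⟩
  calc a + (i + p * a - a) % p ≡ a + (i + p * a - a) [MOD p] := (Nat.mod_modEq _ _).add_left a
    _ = i + p * a := by omega
    _ ≡ i [MOD p] := by simp [Nat.ModEq]

theorem exists_getElem_eq_of_isInfix {w z : List α} (h : w <:+: z) :
    ∃ k, ∃ hk : w.length + k ≤ z.length,
      ∀ i (hi : i < w.length), w[i] = z[i + k]'(by omega) := by
  obtain ⟨k, hk, hget⟩ := List.infix_iff_getElem?.1 h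
  refine ⟨k, hk, fun i hi => ?_⟩
  simpa [List.getElem?_eq_getElem (by omega : i + k < z.length)] using (hget i hi).symm

theorem isPeriodOf_length_add_one (w : List α) : IsPeriodOf (w.length + 1) w :=
  ⟨by omega, fun _ h => absurd h (by omega)⟩

theorem minPeriod_isPeriodOf (w : List α) : IsPeriodOf (minPeriod w) w :=
  Nat.sInf_mem (s := {p | IsPeriodOf p w}) ⟨_, isPeriodOf_length_add_one w⟩

theorem minPeriod_le {p : ℕ} {w : List α} (h : IsPeriodOf p w) : minPeriod w ≤ p :=
  Nat.sInf_le h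

namespace IsPeriodOf

variable {p : ℕ} {z : List α}

theorem getElem_add_mul (hp : IsPeriodOf p z) (i k : ℕ) (h : i + p * k < z.length) :
    z[i] = z[i + p * k] := by
  induction k with
  | zero => rfl
  | succ k ih =>
    simp only [Nat.mul_succ, ← Nat.add_assoc] at h ⊢
    exact (ih (by omega)).trans (hp.2 _ h)

theorem getElem_eq_of_modEq (hp : IsPeriodOf p z) {i j : ℕ} (hij : i ≡ j [MOD p])
    (hi : i < z.length) (hj : j < z.length) : z[i] = z[j] := by
  wlog hle : i ≤ j generalizing i j
  · exact (this hij.symm hj hi (by omega)).symm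
  obtain ⟨k, hk⟩ := (Nat.modEq_iff_dvd' hle).1 hij
  obtain rfl : j = i + p * k := by omega
  exact hp.getElem_add_mul i k hj

theorem of_isInfix_s2 {w : List α} (hp : IsPeriodOf p z) (hw : w <:+: z) : IsPeriodOf p w := by
  obtain ⟨k, hk, hwz⟩ := exists_getElem_eq_of_isInfix hw
  refine ⟨hp.1, fun i hi => ?_⟩
  rw [hwz, hwz, hp.2 (i + k) (by omega)]
  congr 1; omega

theorem extend_of_isInfix {w : List α} {Θ : ℕ} (hΘ : IsPeriodOf Θ z) (hw : w <:+: z)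
    (hp : IsPeriodOf p w) (hlen : Θ + p ≤ w.length) : IsPeriodOf p z := by
  obtain ⟨k, hk, hwz⟩ := exists_getElem_eq_of_isInfix hw
  refine ⟨hp.1, fun i hi => ?_⟩
  obtain ⟨j, hji, hkj, hjk⟩ := exists_modEq_mem_Ico hΘ.1 k i
  obtain ⟨d, rfl⟩ := Nat.exists_eq_add_of_le' hkj
  calc z[i] = z[d + k] := hΘ.getElem_eq_of_modEq hji.symm _ (by omega)
    _ = w[d] := (hwz d (by omega)).symm
    _ = w[d + p] := hp.2 d (by omega)
    _ = z[d + k + p] := by rw [hwz]; congr 1; omega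
    _ = z[i + p] := hΘ.getElem_eq_of_modEq (hji.add_right p) _ _

end IsPeriodOf

theorem minPeriod_eq_of_isInfix {w z : List α} (hw : w <:+: z)
    (hlen : minPeriod z + minPeriod w ≤ w.length) : minPeriod w = minPeriod z :=
  le_antisymm (minPeriod_le ((minPeriod_isPeriodOf z).of_isInfix_s2 hw))
    (minPeriod_le ((minPeriod_isPeriodOf z).extend_of_isInfix hw (minPeriod_isPeriodOf w) hlen))

/-- If `w, w'` are factors of `z`, with minimal periods `T, T'`, the minimal
period of `z` is `Θ`, and `Θ + T ≤ |w|`, `Θ + T' ≤ |w'|`, then `T = T'`. -/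
theorem stmt2 {α : Type*} (z w w' : List α) (T T' Θ : ℕ)
    (hw : w <:+: z) (hw' : w' <:+: z)
    (hT : T = minPeriod w) (hT' : T' = minPeriod w') (hΘ : Θ = minPeriod z)
    (h1 : Θ + T ≤ w.length) (h2 : Θ + T' ≤ w'.length) :
    T = T' := by
  subst hT hT' hΘ
  rw [minPeriod_eq_of_isInfix hw h1, minPeriod_eq_of_isInfix hw' h2]

end PalPaper
end

section
/- Every paperfolding sequence u = (u_n)_{n ≥ 1} has no palindromic factor of length k for any k ≥ 14; that is, pal_u(k) = 0 for all k ≥ 14. -/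
namespace PalPaper

variable {α : Type*}

/-- `(u n)_{n ≥ 1}` is a paperfolding sequence: there are unfolding
instructions `ins m` such that `u (2^m (2j+1)) ≡ j + ins m (mod 2)`. -/
def IsPaperfolding (u : ℕ → ZMod 2) : Prop :=
  ∃ ins : ℕ → ZMod 2, ∀ m j : ℕ, u (2 ^ m * (2 * j + 1)) = (j : ZMod 2) + ins m

/-- A factor of the sequence `(u n)_{n ≥ 1}` (indices start at `1`). -/
def IsFactorFrom1 (u : ℕ → ZMod 2) (w : List (ZMod 2)) : Prop :=
  ∃ i, 1 ≤ i ∧ w = factorAt u i w.length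

/-- Palindrome complexity of the sequence `(u n)_{n ≥ 1}`. -/
noncomputable def palComplexityFrom1 (u : ℕ → ZMod 2) (k : ℕ) : ℕ :=
  Set.ncard {w : List (ZMod 2) | w.length = k ∧ IsFactorFrom1 u w ∧ IsPalindrome w}


/-! Writing `n = 2^m (2j+1)`, the value `u n` is `j + ins m`; for `n` not divisible by `16` this
depends only on `n mod 32` and on `ins 0, …, ins 3`, and `15` consecutive integers contain at most
one multiple of `16`. So every factor of length `14` or `15` is a factor of one of finitely many
words of period `32`, and an exhaustive check shows that none of these factors is a palindrome.
Cutting equally many letters off both ends of a palindrome of length `k ≥ 14` leaves one of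
length `14` or `15`. -/

section Palindrome

variable {α : Type*}

theorem isPalindrome_factorAt_iff {u : ℕ → α} {i k : ℕ} :
    IsPalindrome (factorAt u i k) ↔ ∀ t < k, u (i + t) = u (i + (k - 1 - t)) := by
  simp only [IsPalindrome, factorAt, List.ext_getElem_iff, List.length_reverse,
    List.length_map, List.length_range, List.getElem_reverse, List.getElem_map,
    List.getElem_range, true_and]
  constructor
  · intro h t ht
    rw [← h (k - 1 - t) (by omega) (by omega)]
    congr 2
    omega
  · intro h t ht _
    exact (h t ht).symm

theorem IsPalindrome.factorAt_center {u : ℕ → α} {i k d : ℕ}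
    (h : IsPalindrome (factorAt u i (k + 2 * d))) : IsPalindrome (factorAt u (i + d) k) := by
  rw [isPalindrome_factorAt_iff] at h ⊢
  intro t ht
  have := h (d + t) (by omega)
  rwa [← add_assoc, show k + 2 * d - 1 - (d + t) = d + (k - 1 - t) by omega,
    ← add_assoc] at this

end Palindrome

/-- The value of `u n` for `n ≡ s (mod 32)`, given the instructions `a0, …, a3` and the
value `b` of `u` at the multiple of `16` under consideration. -/
def foldModel (a0 a1 a2 a3 b : ZMod 2) (s : ℕ) : ZMod 2 :=
  if s % 2 = 1 then ((s / 2 : ℕ) : ZMod 2) + a0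
  else if s % 4 = 2 then ((s / 4 : ℕ) : ZMod 2) + a1
  else if s % 8 = 4 then ((s / 8 : ℕ) : ZMod 2) + a2
  else if s % 16 = 8 then ((s / 16 : ℕ) : ZMod 2) + a3
  else b

theorem foldModel_of_mod_sixteen_eq_zero (a0 a1 a2 a3 b : ZMod 2) {s : ℕ} (hs : s % 16 = 0) :
    foldModel a0 a1 a2 a3 b s = b := by
  simp only [foldModel]
  split_ifs <;> first | rfl | omega

theorem foldModel_window_not_palindrome :
    ∀ r : Fin 32, ∀ a0 a1 a2 a3 b : ZMod 2,
      (∃ t : Fin 14, foldModel a0 a1 a2 a3 b ((r + t) % 32) ≠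
        foldModel a0 a1 a2 a3 b ((r + (13 - t)) % 32)) ∧
      (∃ t : Fin 15, foldModel a0 a1 a2 a3 b ((r + t) % 32) ≠
        foldModel a0 a1 a2 a3 b ((r + (14 - t)) % 32)) := by
  decide

def IsPaperfoldingWith (u ins : ℕ → ZMod 2) : Prop :=
  ∀ m j : ℕ, u (2 ^ m * (2 * j + 1)) = (j : ZMod 2) + ins m

namespace IsPaperfoldingWith

variable {u ins : ℕ → ZMod 2}

theorem apply_of_mod_two_pow (h : IsPaperfoldingWith u ins) {m n : ℕ}
    (hn : n % 2 ^ (m + 1) = 2 ^ m) : u n = ((n / 2 ^ (m + 1) : ℕ) : ZMod 2) + ins m := by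
  rw [← h]
  congr 1
  conv_lhs => rw [← Nat.div_add_mod n (2 ^ (m + 1)), hn]
  ring

theorem apply_eq_foldModel (h : IsPaperfoldingWith u ins) (b : ZMod 2) {n : ℕ}
    (hn : n % 16 ≠ 0) : u n = foldModel (ins 0) (ins 1) (ins 2) (ins 3) b (n % 32) := by
  have reduce : ∀ m ≤ 3,
      ((n / 2 ^ (m + 1) : ℕ) : ZMod 2) = ((n % 32 / 2 ^ (m + 1) : ℕ) : ZMod 2) := by
    intro m hm
    rw [ZMod.natCast_eq_natCast_iff']
    interval_cases m <;> omega
  simp only [foldModel]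
  split_ifs
  · rw [h.apply_of_mod_two_pow (m := 0) (by omega), reduce 0 (by norm_num)]; rfl
  · rw [h.apply_of_mod_two_pow (m := 1) (by omega), reduce 1 (by norm_num)]; rfl
  · rw [h.apply_of_mod_two_pow (m := 2) (by omega), reduce 2 (by norm_num)]; rfl
  · rw [h.apply_of_mod_two_pow (m := 3) (by omega), reduce 3 (by norm_num)]; rfl
  · omega

/-- `16 * ((i + 15) / 16)` is the only multiple of `16` that can occur among `i, …, i + 14`. -/
theorem apply_add_eq_foldModel (h : IsPaperfoldingWith u ins) {i t : ℕ} (ht : t < 15) :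
    u (i + t) = foldModel (ins 0) (ins 1) (ins 2) (ins 3) (u (16 * ((i + 15) / 16)))
      ((i + t) % 32) := by
  by_cases h16 : (i + t) % 16 = 0
  · rw [foldModel_of_mod_sixteen_eq_zero _ _ _ _ _ (by omega)]
    congr 1
    omega
  · exact h.apply_eq_foldModel _ h16

end IsPaperfoldingWith

namespace IsPaperfolding

variable {u : ℕ → ZMod 2}

theorem not_isPalindrome_factorAt_of_length (hu : IsPaperfolding u) (i : ℕ) {L : ℕ}
    (hL : L = 14 ∨ L = 15) : ¬ IsPalindrome (factorAt u i L) := by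
  obtain ⟨ins, h : IsPaperfoldingWith u ins⟩ := hu
  rw [isPalindrome_factorAt_iff]
  intro hpal
  set b := u (16 * ((i + 15) / 16))
  have hwindow : ∀ t < L, foldModel (ins 0) (ins 1) (ins 2) (ins 3) b ((i % 32 + t) % 32) =
      foldModel (ins 0) (ins 1) (ins 2) (ins 3) b ((i % 32 + (L - 1 - t)) % 32) := by
    intro t ht
    simp only [Nat.mod_add_mod]
    rw [← h.apply_add_eq_foldModel (by omega), ← h.apply_add_eq_foldModel (by omega)]
    exact hpal t ht
  have hcheck :=
    foldModel_window_not_palindrome ⟨i % 32, by omega⟩ (ins 0) (ins 1) (ins 2) (ins 3) b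
  rcases hL with rfl | rfl
  · obtain ⟨t, hne⟩ := hcheck.1
    exact hne (hwindow t t.2)
  · obtain ⟨t, hne⟩ := hcheck.2
    exact hne (hwindow t t.2)

theorem not_isPalindrome_factorAt (hu : IsPaperfolding u) (i : ℕ) {k : ℕ} (hk : 14 ≤ k) :
    ¬ IsPalindrome (factorAt u i k) := by
  obtain ⟨L, d, hL, rfl⟩ : ∃ L d, (L = 14 ∨ L = 15) ∧ k = L + 2 * d :=
    ⟨14 + k % 2, (k - 14) / 2, by omega, by omega⟩
  exact fun h => hu.not_isPalindrome_factorAt_of_length (i + d) hL h.factorAt_center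

end IsPaperfolding

/-- A paperfolding sequence has no palindromic factor of length `k ≥ 14`. -/
theorem stmt3 (u : ℕ → ZMod 2) (hu : IsPaperfolding u) :
    ∀ k, 14 ≤ k → palComplexityFrom1 u k = 0 := by
  intro k hk
  rw [palComplexityFrom1, ← Set.ncard_empty (List (ZMod 2))]
  congr 1
  refine Set.eq_empty_of_forall_notMem ?_
  rintro w ⟨rfl, ⟨i, -, hw⟩, hpal⟩
  exact hu.not_isPalindrome_factorAt i hk (hw ▸ hpal)

end PalPaper
end

section
/- Let u = (u_n)_{n ≥ 0} be a fixed point of a primitive morphism on a finite alphabet. Then the palindrome complexity pal_u(k) is bounded: there exists a constant C such that pal_u(k) ≤ C for all k ≥ 1. -/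
namespace PalPaper

variable {α : Type*}

/-!
If `u` is periodic with period `d`, it has at most `d` factors of each length. Otherwise, as a
fixed point of a primitive morphism, `u` is linearly recurrent: every factor of length `n` occurs
in every window of length `K n`. Two palindromes of length `k` starting `e` apart give `u` the
local period `2 e` on a stretch of length `k + e`, and by linear recurrence a local period holding
on more than `2 K + 2` periods is global. So in the aperiodic case the palindromes of length `k`
have occurrences in `[0, K k]` which are pairwise more than `k / (4 K + 4)` apart, and there are
at most `(4 K + 4) K + 1` of them.
-/

open Function

def MatchAt (u : ℕ → α) (w : List α) (i : ℕ) : Prop :=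
  ∀ j (h : j < w.length), w[j] = u (i + j)

def IsLinearlyRecurrent (u : ℕ → α) (K : ℕ) : Prop :=
  ∀ n x y, 0 < n → ∃ i, y ≤ i ∧ i + n ≤ y + K * n ∧ factorAt u i n = factorAt u x n

section Factors

variable {u : ℕ → α}

@[simp] lemma length_factorAt (u : ℕ → α) (i k : ℕ) : (factorAt u i k).length = k := by
  simp [factorAt]

@[simp] lemma getElem_factorAt (u : ℕ → α) {i k j : ℕ} (h : j < (factorAt u i k).length) :
    (factorAt u i k)[j] = u (i + j) := by
  simp [factorAt]

lemma factorAt_eq_factorAt_iff {i i' k : ℕ} :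
    factorAt u i k = factorAt u i' k ↔ ∀ j < k, u (i + j) = u (i' + j) := by
  simp [factorAt]

lemma matchAt_iff {w : List α} {i : ℕ} : MatchAt u w i ↔ w = factorAt u i w.length := by
  refine ⟨fun h => List.ext_getElem (by simp) fun j h1 _ => by simp [h j h1], ?_⟩
  intro h j hj
  rw [List.getElem_of_eq h, getElem_factorAt]

lemma matchAt_factorAt (u : ℕ → α) (i k : ℕ) : MatchAt u (factorAt u i k) i := by
  rw [matchAt_iff, length_factorAt]

lemma seqPrefix_eq_factorAt (u : ℕ → α) (m : ℕ) : seqPrefix u m = factorAt u 0 m := by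
  simp [seqPrefix, factorAt]

lemma factorAt_two (u : ℕ → α) (t : ℕ) : factorAt u t 2 = [u t, u (t + 1)] := by
  simp [factorAt, List.range_succ]

lemma MatchAt.append {w w' : List α} {i : ℕ} (h : MatchAt u w i)
    (h' : MatchAt u w' (i + w.length)) : MatchAt u (w ++ w') i := by
  intro j hj
  rcases Nat.lt_or_ge j w.length with hlt | hge
  · rw [List.getElem_append_left hlt, h j hlt]
  · rw [List.getElem_append_right hge, h' _ (by simp at hj; omega)]
    congr 1; omega

lemma MatchAt.factorAt_infix {y : List α} {q x n : ℕ} (hy : MatchAt u y q)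
    (hqx : q ≤ x) (hxn : x + n ≤ q + y.length) : factorAt u x n <:+: y := by
  have hxn' : factorAt u x n = (y.drop (x - q)).take n := by
    refine List.ext_getElem (by simp; omega) fun j hj _ => ?_
    simp only [List.getElem_take, List.getElem_drop, getElem_factorAt]
    rw [hy _ (by simp at hj; omega)]
    congr 1; omega
  rw [hxn']
  exact (List.take_prefix _ _).isInfix.trans (List.drop_suffix _ _).isInfix

lemma MatchAt.of_infix {y w : List α} {q : ℕ} (hy : MatchAt u y q) (hw : w <:+: y) :
    ∃ i, q ≤ i ∧ i + w.length ≤ q + y.length ∧ MatchAt u w i := by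
  obtain ⟨s, t, rfl⟩ := hw
  refine ⟨q + s.length, by omega, by simp; omega, fun j hj => ?_⟩
  have := hy (s.length + j) (by simp; omega)
  rw [List.getElem_append_left (by simp; omega), List.getElem_append_right (by omega)] at this
  simp only [Nat.add_sub_cancel_left] at this
  rw [this, Nat.add_assoc]

end Factors

lemma length_flatMap_le {β : Type*} {l : List α} {f : α → List β} {c : ℕ}
    (h : ∀ b ∈ l, (f b).length ≤ c) : (l.flatMap f).length ≤ l.length * c := by
  rw [List.length_flatMap]
  simpa using List.sum_le_card_nsmul (l.map fun b => (f b).length) c (by simpa using h)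

lemma le_length_flatMap {β : Type*} {l : List α} {f : α → List β} {c : ℕ}
    (h : ∀ b ∈ l, c ≤ (f b).length) : l.length * c ≤ (l.flatMap f).length := by
  rw [List.length_flatMap]
  simpa using List.card_nsmul_le_sum (l.map fun b => (f b).length) c (by simpa using h)

lemma morphIter_add (σ : α → List α) (p q : ℕ) (a : α) :
    morphIter σ (p + q) a = (morphIter σ q a).flatMap (morphIter σ p) := by
  induction q generalizing a with
  | zero => simp [morphIter]
  | succ q ih =>
    simp only [morphIter, List.flatMap_assoc]
    exact List.flatMap_congr fun b _ => ih b

section FixedPoint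

variable {g : α → List α} {u : ℕ → α}

lemma isFixedPointOf_iff :
    IsFixedPointOf g u ↔
      ∀ n, (seqPrefix u n).flatMap g = seqPrefix u ((seqPrefix u n).flatMap g).length := by
  simp [IsFixedPointOf, IsMorphicImage, substPrefix, seqPrefix, List.flatMap_map]

lemma IsFixedPointOf.matchAt_flatMap (hg : IsFixedPointOf g u) (n : ℕ) :
    MatchAt u ((seqPrefix u n).flatMap g) 0 := by
  rw [isFixedPointOf_iff.mp hg n, seqPrefix_eq_factorAt]
  exact matchAt_factorAt u 0 _

lemma IsFixedPointOf.iterate {σ : α → List α} (hu : IsFixedPointOf σ u) (m : ℕ) :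
    IsFixedPointOf (morphIter σ m) u := by
  rw [isFixedPointOf_iff] at hu ⊢
  induction m with
  | zero => simp [morphIter, seqPrefix_eq_factorAt]
  | succ m ih =>
    intro n
    have hsplit : (seqPrefix u n).flatMap (morphIter σ (m + 1)) =
        ((seqPrefix u n).flatMap σ).flatMap (morphIter σ m) := by
      simp [morphIter, List.flatMap_assoc]
    rw [hsplit, hu n]
    exact ih _

end FixedPoint

section Blocks

variable {g : α → List α} {u : ℕ → α}

def blockStart (g : α → List α) (u : ℕ → α) (t : ℕ) : ℕ :=
  ((seqPrefix u t).flatMap g).length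

lemma seqPrefix_succ (u : ℕ → α) (t : ℕ) : seqPrefix u (t + 1) = seqPrefix u t ++ [u t] := by
  simp [seqPrefix, List.range_succ]

@[simp] lemma blockStart_zero (g : α → List α) (u : ℕ → α) : blockStart g u 0 = 0 := by
  simp [blockStart, seqPrefix]

lemma blockStart_succ (g : α → List α) (u : ℕ → α) (t : ℕ) :
    blockStart g u (t + 1) = blockStart g u t + (g (u t)).length := by
  simp [blockStart, seqPrefix_succ]

lemma IsFixedPointOf.matchAt_blockStart (hg : IsFixedPointOf g u) (t : ℕ) :
    MatchAt u (g (u t)) (blockStart g u t) := by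
  intro j hj
  have h := hg.matchAt_flatMap (t + 1) (blockStart g u t + j)
    (by simp [seqPrefix_succ, blockStart] at hj ⊢; omega)
  simp only [seqPrefix_succ, List.flatMap_append, List.flatMap_singleton] at h
  rw [List.getElem_append_right (by simp [blockStart])] at h
  simpa [blockStart] using h

lemma exists_blockStart_le_lt (hg : ∀ a, g a ≠ []) (x : ℕ) :
    ∃ t, blockStart g u t ≤ x ∧ x < blockStart g u (t + 1) := by
  have hpos : ∀ t, 0 < (g (u t)).length := fun t => List.length_pos_of_ne_nil (hg _)
  induction x with
  | zero => exact ⟨0, by simp, by simp [blockStart_succ, hpos 0]⟩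
  | succ x ih =>
    obtain ⟨t, h1, h2⟩ := ih
    rcases Nat.lt_or_ge (x + 1) (blockStart g u (t + 1)) with h | h
    · exact ⟨t, by omega, h⟩
    · exact ⟨t + 1, h, by rw [blockStart_succ]; have := hpos (t + 1); omega⟩

lemma IsFixedPointOf.exists_matchAt_window (hg : IsFixedPointOf g u) {w : List α}
    (hw : ∀ a, w <:+: g a) {B : ℕ} (hB : ∀ a, (g a).length ≤ B) (y : ℕ) :
    ∃ i, y ≤ i ∧ i + w.length ≤ y + 2 * B ∧ MatchAt u w i := by
  -- the block following the one containing `y` ends before `y + 2 B`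
  rcases eq_or_ne w [] with rfl | hw0
  · exact ⟨y, le_rfl, by simp, fun j hj => by simp at hj⟩
  have hg0 : ∀ a, g a ≠ [] := fun a h => hw0 (List.eq_nil_of_infix_nil (h ▸ hw a))
  obtain ⟨t, h1, h2⟩ := exists_blockStart_le_lt (u := u) hg0 y
  obtain ⟨i, hi1, hi2, hi⟩ := (hg.matchAt_blockStart (t + 1)).of_infix (hw (u (t + 1)))
  have := blockStart_succ g u t
  have := hB (u t)
  have := hB (u (t + 1))
  exact ⟨i, by omega, by omega, hi⟩

lemma IsFixedPointOf.exists_factorAt_infix_flatMap_factorAt_two (hg : IsFixedPointOf g u)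
    {n : ℕ} (hn : 0 < n) (hlen : ∀ a, n ≤ (g a).length) (x : ℕ) :
    ∃ t, factorAt u x n <:+: (factorAt u t 2).flatMap g := by
  obtain ⟨t, h1, h2⟩ := exists_blockStart_le_lt (g := g) (u := u)
    (fun a h => by have := hlen a; rw [h, List.length_nil] at this; omega) x
  have hpair : MatchAt u ((factorAt u t 2).flatMap g) (blockStart g u t) := by
    simpa [factorAt_two] using (hg.matchAt_blockStart t).append
      (by rw [← blockStart_succ]; exact hg.matchAt_blockStart (t + 1))
  refine ⟨t, hpair.factorAt_infix h1 ?_⟩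
  have := blockStart_succ g u t
  have := hlen (u (t + 1))
  simp [factorAt_two]
  omega

end Blocks

lemma two_le_length_of_mem {l : List α} {a b : α} (ha : a ∈ l) (hb : b ∈ l) (hne : a ≠ b) :
    2 ≤ l.length := by
  rcases l with _ | ⟨x, _ | ⟨y, t⟩⟩ <;> simp_all

section Growth

variable [Fintype α] {σ : α → List α}

noncomputable def lengthBound (σ : α → List α) : ℕ :=
  max 1 (Finset.univ.sup fun a => (σ a).length)

lemma one_le_lengthBound (σ : α → List α) : 1 ≤ lengthBound σ := le_max_left _ _

lemma length_le_lengthBound (σ : α → List α) (a : α) : (σ a).length ≤ lengthBound σ :=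
  le_max_of_le_right (Finset.le_sup (f := fun a => (σ a).length) (Finset.mem_univ a))

lemma length_morphIter_add_le {p B : ℕ} (hB : ∀ c, (morphIter σ p c).length ≤ B)
    (q : ℕ) (a : α) : (morphIter σ (p + q) a).length ≤ lengthBound σ ^ q * B := by
  induction q generalizing a with
  | zero => simpa [morphIter] using hB a
  | succ q ih =>
    rw [← Nat.add_assoc]
    calc (morphIter σ (p + q + 1) a).length
        = ((σ a).flatMap (morphIter σ (p + q))).length := rfl
      _ ≤ (σ a).length * (lengthBound σ ^ q * B) := length_flatMap_le fun b _ => ih b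
      _ ≤ lengthBound σ * (lengthBound σ ^ q * B) :=
          Nat.mul_le_mul_right _ (length_le_lengthBound σ a)
      _ = lengthBound σ ^ (q + 1) * B := by ring

lemma length_morphIter_le (m : ℕ) (a : α) :
    (morphIter σ m a).length ≤ lengthBound σ ^ m := by
  simpa using length_morphIter_add_le (p := 0) (B := 1) (by simp [morphIter]) m a

end Growth

section Primitive

variable {σ : α → List α} {k0 : ℕ}

lemma morphIter_infix_morphIter_add (hprim : ∀ a b : α, b ∈ morphIter σ k0 a)
    (m : ℕ) (c a : α) :
    morphIter σ m c <:+: morphIter σ (m + k0) a := by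
  rw [morphIter_add]
  exact List.infix_flatMap_of_mem (hprim a c) _

lemma length_morphIter_add_le_mul [Fintype α] (hprim : ∀ a b : α, b ∈ morphIter σ k0 a)
    (m : ℕ) (a b : α) :
    (morphIter σ (m + k0) b).length ≤ lengthBound σ ^ k0 * (morphIter σ (m + k0) a).length :=
  length_morphIter_add_le (fun c => (morphIter_infix_morphIter_add hprim m c a).length_le) k0 b

lemma two_pow_le_length_morphIter [Nontrivial α] (hprim : ∀ a b : α, b ∈ morphIter σ k0 a)
    (j : ℕ) (a : α) : 2 ^ j ≤ (morphIter σ (k0 * j) a).length := by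
  induction j generalizing a with
  | zero => simp [morphIter]
  | succ j ih =>
    obtain ⟨b₁, b₂, hne⟩ := exists_pair_ne α
    have h2 := two_le_length_of_mem (hprim a b₁) (hprim a b₂) hne
    rw [Nat.mul_succ, morphIter_add, pow_succ, mul_comm]
    exact (Nat.mul_le_mul_right _ h2).trans (le_length_flatMap fun b _ => ih b)

lemma exists_le_length_morphIter [Nontrivial α] (hprim : ∀ a b : α, b ∈ morphIter σ k0 a)
    (n : ℕ) (a : α) : ∃ j, n ≤ (morphIter σ j a).length :=
  ⟨k0 * n, n.lt_two_pow_self.le.trans (two_pow_le_length_morphIter hprim n a)⟩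

lemma exists_morphIter_length_between [Fintype α] [Nontrivial α]
    (hprim : ∀ a b : α, b ∈ morphIter σ k0 a) {n : ℕ} (hn : 0 < n) (a₀ : α) :
    ∃ m, ∀ b, n ≤ (morphIter σ m b).length ∧
      (morphIter σ m b).length ≤ lengthBound σ ^ (3 * k0 + 1) * n := by
  classical
  have hex : ∃ j, n ≤ (morphIter σ (j + k0) a₀).length := by
    obtain ⟨j, hj⟩ := exists_le_length_morphIter hprim n a₀
    exact ⟨j, hj.trans (morphIter_infix_morphIter_add hprim j a₀ a₀).length_le⟩
  set j := Nat.find hex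
  -- by minimality of `j`, the word `σ^(j + k0) a₀` is not much longer than `n`
  have hj : (morphIter σ (j + k0) a₀).length ≤ lengthBound σ ^ (k0 + 1) * n := by
    have hM := one_le_lengthBound σ
    rcases Nat.eq_zero_or_pos j with h0 | hpos
    · rw [h0, Nat.zero_add]
      calc (morphIter σ k0 a₀).length ≤ lengthBound σ ^ k0 := length_morphIter_le k0 a₀
        _ ≤ lengthBound σ ^ (k0 + 1) * 1 := by
          rw [mul_one]; exact Nat.pow_le_pow_right hM (by omega)
        _ ≤ lengthBound σ ^ (k0 + 1) * n := by gcongr; omega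
    · obtain ⟨i, hi⟩ : ∃ i, j = i + 1 := ⟨j - 1, by omega⟩
      have hlt : (morphIter σ (i + k0) a₀).length < n := not_le.mp (Nat.find_min hex (by omega))
      rw [hi, show i + 1 + k0 = 1 + (i + k0) by ring, morphIter_add]
      calc ((morphIter σ (i + k0) a₀).flatMap (morphIter σ 1)).length
          ≤ (morphIter σ (i + k0) a₀).length * lengthBound σ ^ 1 :=
            length_flatMap_le fun c _ => length_morphIter_le 1 c
        _ ≤ n * lengthBound σ ^ (k0 + 1) := by
            gcongr; omega
        _ = lengthBound σ ^ (k0 + 1) * n := mul_comm _ _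
  refine ⟨j + k0 + k0, fun b => ⟨?_, ?_⟩⟩
  · exact (Nat.find_spec hex).trans (morphIter_infix_morphIter_add hprim _ a₀ b).length_le
  · calc (morphIter σ (j + k0 + k0) b).length
        ≤ lengthBound σ ^ k0 * (lengthBound σ ^ k0 * (morphIter σ (j + k0) a₀).length) :=
          length_morphIter_add_le (fun c => length_morphIter_add_le_mul hprim j a₀ c) k0 b
      _ ≤ lengthBound σ ^ k0 * (lengthBound σ ^ k0 * (lengthBound σ ^ (k0 + 1) * n)) := by
          gcongr
      _ = lengthBound σ ^ (3 * k0 + 1) * n := by ring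

end Primitive

lemma exists_bound_forall_exists_le_eq {β : Type*} [Finite β] (f : ℕ → β) :
    ∃ D, ∀ t, ∃ t' ≤ D, f t' = f t := by
  obtain ⟨D, hD⟩ := (Set.finite_range fun b : β => sInf {t | f t = b}).bddAbove
  exact ⟨D, fun t => ⟨sInf {s | f s = f t}, hD ⟨f t, rfl⟩,
    Nat.sInf_mem (s := {s | f s = f t}) ⟨t, rfl⟩⟩⟩

section Recurrence

variable [Fintype α] [Nontrivial α] {σ : α → List α} {u : ℕ → α} {k0 : ℕ}

/-- Every two-letter factor already occurs in a prefix of bounded length, and that prefix lies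
inside `σ^T (u 0)`, hence inside every `σ^(T + k0) a`. -/
lemma exists_factorAt_two_infix_morphIter (hu : IsFixedPointOf σ u)
    (hprim : ∀ a b : α, b ∈ morphIter σ k0 a) :
    ∃ L, ∀ t a, factorAt u t 2 <:+: morphIter σ L a := by
  obtain ⟨D, hD⟩ := exists_bound_forall_exists_le_eq fun t => (u t, u (t + 1))
  obtain ⟨T, hT⟩ := exists_le_length_morphIter hprim (D + 2) (u 0)
  refine ⟨T + k0, fun t a => ?_⟩
  obtain ⟨t', ht', heq⟩ := hD t
  simp only [Prod.mk.injEq] at heq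
  have hprefix : MatchAt u (morphIter σ T (u 0)) 0 := by
    simpa using (hu.iterate T).matchAt_blockStart 0
  rw [factorAt_two, ← heq.1, ← heq.2, ← factorAt_two]
  exact (hprefix.factorAt_infix (Nat.zero_le _) (by omega)).trans
    (morphIter_infix_morphIter_add hprim T (u 0) a)

theorem isLinearlyRecurrent_of_primitive (hu : IsFixedPointOf σ u)
    (hprim : ∀ a b : α, b ∈ morphIter σ k0 a) : ∃ K, IsLinearlyRecurrent u K := by
  obtain ⟨L, hL⟩ := exists_factorAt_two_infix_morphIter hu hprim
  refine ⟨2 * (lengthBound σ ^ L * lengthBound σ ^ (3 * k0 + 1)), fun n x y hn => ?_⟩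
  obtain ⟨m, hm⟩ := exists_morphIter_length_between hprim hn (u 0)
  obtain ⟨t, ht⟩ := (hu.iterate m).exists_factorAt_infix_flatMap_factorAt_two hn
    (fun b => (hm b).1) x
  have hw : ∀ a, factorAt u x n <:+: morphIter σ (m + L) a := fun a => by
    rw [morphIter_add]
    exact ht.trans ((hL t a).flatMap _)
  have hB : ∀ a, (morphIter σ (m + L) a).length ≤
      lengthBound σ ^ L * (lengthBound σ ^ (3 * k0 + 1) * n) :=
    length_morphIter_add_le (fun b => (hm b).2) L
  obtain ⟨i, hyi, hin, hi⟩ := (hu.iterate (m + L)).exists_matchAt_window hw hB y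
  refine ⟨i, hyi, ?_, ?_⟩
  · simp only [length_factorAt] at hin
    linarith
  · rw [matchAt_iff, length_factorAt] at hi
    exact hi.symm

end Recurrence

lemma apply_add_eq_of_isPalindrome_factorAt {u : ℕ → α} {i k : ℕ}
    (h : IsPalindrome (factorAt u i k)) {j : ℕ} (hj : j < k) :
    u (i + j) = u (i + (k - 1 - j)) := by
  have := List.getElem_of_eq h (i := j) (by simpa using hj)
  rw [List.getElem_reverse] at this
  simpa using this.symm

lemma factorAt_mod_of_periodic {u : ℕ → α} {d : ℕ} (hp : Periodic u d) (x k : ℕ) :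
    factorAt u (x % d) k = factorAt u x k := by
  refine factorAt_eq_factorAt_iff.mpr fun j _ => ?_
  have := Nat.mod_add_div' x d
  rw [← hp.nat_mul (x / d) (x % d + j), Nat.cast_id]
  congr 1
  omega

lemma palComplexity_le_of_periodic {u : ℕ → α} {d : ℕ} (hd : 0 < d) (hp : Periodic u d)
    (k : ℕ) : palComplexity u k ≤ d :=
  calc palComplexity u k ≤ ((fun i => factorAt u i k) '' Set.Iio d).ncard := by
        refine Set.ncard_le_ncard ?_ ((Set.finite_Iio d).image _)
        rintro w ⟨hk, ⟨x, hx⟩, -⟩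
        refine ⟨x % d, Nat.mod_lt x hd, ?_⟩
        show factorAt u (x % d) k = w
        rw [factorAt_mod_of_periodic hp, hx, hk]
    _ ≤ (Set.Iio d).ncard := Set.ncard_image_le (Set.finite_Iio d)
    _ = d := Set.ncard_Iio_nat d

lemma ncard_le_of_separated {s : Set ℕ} {N c m : ℕ} (hm : 0 < m) (hs : ∀ a ∈ s, a ≤ N)
    (hsep : ∀ a ∈ s, ∀ b ∈ s, a < b → m ≤ c * (b - a)) : s.ncard ≤ c * N / m + 1 := by
  -- cutting `[0, c N]` into intervals of length `m`, the points `c a` for `a ∈ s` lie in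
  -- pairwise distinct intervals
  have hne : ∀ a ∈ s, ∀ b ∈ s, a < b → c * a / m ≠ c * b / m := by
    intro a ha b hb hab hdiv
    have hgap := hsep a ha b hb hab
    have ha' := Nat.div_add_mod (c * a) m
    have hb' := Nat.div_add_mod (c * b) m
    have := Nat.mod_lt (c * b) hm
    rw [Nat.mul_sub] at hgap
    rw [hdiv] at ha'
    generalize m * (c * b / m) = q at ha' hb'
    generalize (c * a) % m = r at ha'
    generalize (c * b) % m = r' at hb' this
    omega
  calc s.ncard ≤ (Set.Iio (c * N / m + 1)).ncard := by
        refine Set.ncard_le_ncard_of_injOn (fun a => c * a / m) (fun a ha => ?_) ?_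
        · exact Nat.lt_succ_of_le (Nat.div_le_div_right (Nat.mul_le_mul_left c (hs a ha)))
        · intro a ha b hb hab
          rcases lt_trichotomy a b with h | h | h
          · exact absurd hab (hne a ha b hb h)
          · exact h
          · exact absurd hab.symm (hne b hb a ha h)
    _ = c * N / m + 1 := Set.ncard_Iio_nat _

namespace IsLinearlyRecurrent

variable {u : ℕ → α} {K : ℕ}

lemma periodic_of_locally_periodic (hK : IsLinearlyRecurrent u K) {a d L : ℕ} (hd : 0 < d)
    (hL : (2 * K + 2) * d ≤ L) (hloc : ∀ s, s + d < L → u (a + s + d) = u (a + s)) :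
    Periodic u d := by
  intro x
  obtain ⟨i, hai, hiK, hix⟩ := hK (2 * d) x a (by omega)
  rw [factorAt_eq_factorAt_iff] at hix
  have : K * (2 * d) + 2 * d = (2 * K + 2) * d := by ring
  have hi := hloc (i - a) (by omega)
  have hi₀ := hix 0 (by omega)
  rw [Nat.add_zero, Nat.add_zero] at hi₀
  rw [show a + (i - a) = i by omega, hix d (by omega), hi₀] at hi
  exact hi

/-- Two palindromes of length `k` at distance `e` force a local period `2 e` on a stretch of
length `k + e`; in an aperiodic sequence this stretch must be short. -/
lemma lt_mul_of_isPalindrome (hK : IsLinearlyRecurrent u K)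
    (hap : ∀ d, 0 < d → ¬Periodic u d) {i e k : ℕ} (he : 0 < e)
    (h₁ : IsPalindrome (factorAt u i k)) (h₂ : IsPalindrome (factorAt u (i + e) k)) :
    k < (4 * K + 4) * e := by
  by_contra! hk
  refine hap (2 * e) (by omega) (hK.periodic_of_locally_periodic (a := i) (L := k + e)
    (by omega) (by linarith) fun s hs => ?_)
  have hs₁ := apply_add_eq_of_isPalindrome_factorAt h₁ (j := s) (by omega)
  have hs₂ := apply_add_eq_of_isPalindrome_factorAt h₂ (j := k - 1 - s - e) (by omega)
  rw [show i + e + (k - 1 - s - e) = i + (k - 1 - s) by omega,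
    show i + e + (k - 1 - (k - 1 - s - e)) = i + s + 2 * e by omega] at hs₂
  rw [hs₁, hs₂]

lemma palComplexity_le (hK : IsLinearlyRecurrent u K) (hap : ∀ d, 0 < d → ¬Periodic u d)
    {k : ℕ} (hk : 0 < k) : palComplexity u k ≤ (4 * K + 4) * K + 1 := by
  set P := {w : List α | w.length = k ∧ IsFactor u w ∧ IsPalindrome w}
  have hocc : ∀ w ∈ P, ∃ i, i ≤ K * k ∧ factorAt u i k = w := by
    rintro w ⟨rfl, ⟨x, hx⟩, -⟩
    obtain ⟨i, -, hi, hix⟩ := hK w.length x 0 hk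
    exact ⟨i, by omega, hix.trans hx.symm⟩
  choose! pos hpos_le hpos using hocc
  have hinj : Set.InjOn pos P := fun w₁ h₁ w₂ h₂ h => by
    rw [← hpos w₁ h₁, ← hpos w₂ h₂, h]
  calc palComplexity u k = (pos '' P).ncard := hinj.ncard_image.symm
    _ ≤ (4 * K + 4) * (K * k) / (k + 1) + 1 := by
        refine ncard_le_of_separated (by omega) (by simpa using hpos_le) ?_
        rintro _ ⟨w₁, h₁, rfl⟩ _ ⟨w₂, h₂, rfl⟩ hlt
        have h₂' := h₂.2.2
        rw [← hpos w₂ h₂, show pos w₂ = pos w₁ + (pos w₂ - pos w₁) by omega] at h₂'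
        rw [← hpos w₁ h₁] at h₁
        exact hK.lt_mul_of_isPalindrome hap (by omega) h₁.2.2 h₂'
    _ ≤ (4 * K + 4) * K + 1 := by
        gcongr
        refine Nat.div_le_of_le_mul ?_
        nlinarith

end IsLinearlyRecurrent

/-- Damanik–Zare: the palindrome complexity of a fixed point of a primitive
morphism on a finite alphabet is bounded. -/
theorem stmt7 {α : Type*} [Fintype α] (σ : α → List α) (hσ : IsPrimitive σ)
    (u : ℕ → α) (hu : IsFixedPointOf σ u) :
    ∃ C : ℕ, ∀ k, 1 ≤ k → palComplexity u k ≤ C := by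
  obtain ⟨k0, -, hprim⟩ := hσ
  by_cases hper : ∃ d, 0 < d ∧ Periodic u d
  · obtain ⟨d, hd, hp⟩ := hper
    exact ⟨d, fun k _ => palComplexity_le_of_periodic hd hp k⟩
  push Not at hper
  have : Nontrivial α := by
    by_contra h
    rw [not_nontrivial_iff_subsingleton] at h
    exact hper 1 one_pos fun x => Subsingleton.elim _ _
  obtain ⟨K, hK⟩ := isLinearlyRecurrent_of_primitive hu hprim
  exact ⟨(4 * K + 4) * K + 1, fun k hk => hK.palComplexity_le hper hk⟩

end PalPaper
end

section
/- Let φ be the morphism on {0,1} defined by φ(0) = 011001 and φ(1) = 001011, let u be any infinite binary sequence, and let v = φ(u). Then v has no palindromic factor of length k for any k ≥ 8; that is, pal_v(k) = 0 for all k ≥ 8. -/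
/-!
Deleting the first and the last letter of a palindrome leaves a palindrome, so it suffices to
rule out palindromic factors of lengths 8 and 9. Since `φ` is 6-uniform, such a factor of
`v = φ(u)` lies inside `φ(a) φ(b) φ(c)` for three consecutive letters `a b c` of `u`, and the
eight words `φ(a) φ(b) φ(c)` are checked by computation.
-/

namespace PalPaper

variable {α : Type*}

lemma IsPalindrome.of_cons_append_singleton {a b : α} {w : List α}
    (h : IsPalindrome (a :: (w ++ [b]))) : IsPalindrome w := by
  simp only [IsPalindrome, List.reverse_cons, List.reverse_append, List.reverse_nil,
    List.nil_append, List.cons_append, List.cons.injEq] at h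
  exact List.append_inj_left' h.2 rfl

instance [DecidableEq α] : DecidablePred (IsPalindrome : List α → Prop) :=
  fun w => inferInstanceAs (Decidable (w.reverse = w))

section Factors

variable (u : ℕ → α)

lemma factorAt_succ_succ (i k : ℕ) :
    factorAt u i (k + 2) = u i :: (factorAt u (i + 1) k ++ [u (i + 1 + k)]) := by
  rw [factorAt, List.range_succ, List.range_succ_eq_map]
  simp [factorAt, Function.comp_def, Nat.add_assoc, Nat.add_comm 1]

lemma factorAt_add_eq_take_drop (i r k n : ℕ) (h : r + k ≤ n) :
    factorAt u (i + r) k = ((factorAt u i n).drop r).take k := by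
  apply List.ext_getElem
  · simp [factorAt]; omega
  · intro j _ _
    simp [factorAt, Nat.add_assoc]

lemma seqPrefix_add (m n : ℕ) : seqPrefix u (m + n) = seqPrefix u m ++ factorAt u m n := by
  simp [seqPrefix, factorAt, List.range_add, Function.comp_def]

lemma not_isPalindrome_factorAt_of_ge {m : ℕ}
    (h₀ : ∀ i, ¬ IsPalindrome (factorAt u i m))
    (h₁ : ∀ i, ¬ IsPalindrome (factorAt u i (m + 1))) :
    ∀ k, m ≤ k → ∀ i, ¬ IsPalindrome (factorAt u i k) := by
  intro k hk
  induction k using Nat.strong_induction_on with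
  | _ k ih =>
    intro i hpal
    obtain rfl | rfl | hk2 : k = m ∨ k = m + 1 ∨ m + 2 ≤ k := by omega
    · exact h₀ i hpal
    · exact h₁ i hpal
    · obtain ⟨l, rfl⟩ : ∃ l, k = l + 2 := ⟨k - 2, by omega⟩
      rw [factorAt_succ_succ] at hpal
      exact ih l (by omega) (by omega) (i + 1) hpal.of_cons_append_singleton

lemma palComplexity_eq_zero {k : ℕ} (h : ∀ i, ¬ IsPalindrome (factorAt u i k)) :
    palComplexity u k = 0 := by
  suffices hempty : {w | w.length = k ∧ IsFactor u w ∧ IsPalindrome w} = ∅ by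
    rw [palComplexity, hempty, Set.ncard_empty]
  refine Set.eq_empty_of_forall_notMem ?_
  rintro w ⟨rfl, ⟨i, hi⟩, hpal⟩
  exact h i (hi ▸ hpal)

end Factors

section Uniform

variable {σ : α → List α} {L : ℕ}

lemma substPrefix_add (u : ℕ → α) (m n : ℕ) :
    substPrefix σ u (m + n) = substPrefix σ u m ++ substPrefix σ (fun j => u (m + j)) n := by
  simp [substPrefix, List.range_add, List.flatMap_map]

lemma length_substPrefix (hσ : ∀ a, (σ a).length = L) (u : ℕ → α) (n : ℕ) :
    (substPrefix σ u n).length = L * n := by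
  simp [substPrefix, List.length_flatMap, hσ, Nat.mul_comm]

lemma IsMorphicImage.factorAt_mul (hσ : ∀ a, (σ a).length = L) {u v : ℕ → α}
    (hv : IsMorphicImage σ u v) (q n : ℕ) :
    factorAt v (L * q) (L * n) = substPrefix σ (fun j => u (q + j)) n := by
  have h := hv (q + n)
  rw [substPrefix_add, List.length_append, length_substPrefix hσ, length_substPrefix hσ,
    seqPrefix_add] at h
  refine (List.append_inj h ?_).2.symm
  rw [length_substPrefix hσ, seqPrefix, List.length_map, List.length_range]

end Uniform

section Phi

variable (φ : Fin 2 → List (Fin 2))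
    (hφ0 : φ 0 = [0, 1, 1, 0, 0, 1]) (hφ1 : φ 1 = [0, 0, 1, 0, 1, 1])

include hφ0 hφ1

lemma length_eq_six : ∀ a, (φ a).length = 6 := by
  simp [Fin.forall_fin_two, hφ0, hφ1]

lemma not_isPalindrome_window :
    ∀ a b c : Fin 2, ∀ r < 6, ∀ k < 2,
      ¬ IsPalindrome (((φ a ++ (φ b ++ φ c)).drop r).take (8 + k)) := by
  obtain rfl : φ = ![[0, 1, 1, 0, 0, 1], [0, 0, 1, 0, 1, 1]] := by
    funext a; fin_cases a <;> assumption
  decide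

lemma not_isPalindrome_factorAt_of_lt_ten {u v : ℕ → Fin 2} (hv : IsMorphicImage φ u v)
    {i k : ℕ} (hk₁ : 8 ≤ k) (hk₂ : k < 10) : ¬ IsPalindrome (factorAt v i k) := by
  have hr := Nat.mod_lt i (show 6 > 0 by norm_num)
  have hwindow := hv.factorAt_mul (length_eq_six φ hφ0 hφ1) (i / 6) 3
  rw [← Nat.div_add_mod i 6, factorAt_add_eq_take_drop v _ _ _ (6 * 3) (by omega), hwindow]
  obtain ⟨l, rfl⟩ : ∃ l, k = 8 + l := ⟨k - 8, by omega⟩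
  simpa [substPrefix, List.range_succ] using
    not_isPalindrome_window φ hφ0 hφ1 _ _ _ _ hr l (by omega)

end Phi

/-- The image of any binary sequence under the morphism `0 → 011001`,
`1 → 001011` has no palindromic factor of length `k ≥ 8`. -/
theorem stmt19 (φ : Fin 2 → List (Fin 2))
    (hφ0 : φ 0 = [0, 1, 1, 0, 0, 1]) (hφ1 : φ 1 = [0, 0, 1, 0, 1, 1])
    (u v : ℕ → Fin 2) (hv : IsMorphicImage φ u v) :
    ∀ k, 8 ≤ k → palComplexity v k = 0 := by
  intro k hk
  apply palComplexity_eq_zero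
  refine not_isPalindrome_factorAt_of_ge v (m := 8) ?_ ?_ k hk <;> intro i
  · exact not_isPalindrome_factorAt_of_lt_ten φ hφ0 hφ1 hv le_rfl (by norm_num)
  · exact not_isPalindrome_factorAt_of_lt_ten φ hφ0 hφ1 hv (by norm_num) (by norm_num)

end PalPaper
end
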